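/- arXiv:2309.01725 — 4 statements merged into one kernel-verified Lean document; each statement's English description precedes it below -/
import Mathlib

section
/- Let Γ be an acyclic digraph, Π = {π₁,…,πₙ} a collection of pairwise non-overlapping paths, and fix vertices I, F. For any nonempty subset {i₁,…,i_k} ⊆ {1,…,n}, the number of directed paths from I to F containing each of π_{i₁},…,π_{i_k} as a subpath equals the sum over all orderings (j₁,…,j_k) of {i₁,…,i_k} of the products γ(I→I_{j_k})·wt(π_{j_k})·γ(F_{j_k}→I_{j_{k-1}})·…·γ(F_{j_1}→F), where all weights are 1 and γ counts directed paths; moreover, for each ordering the product counts exactly the paths containing π_{j_k},…,π_{j_1} in that precise order along the path. -/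
/-!
In an acyclic digraph paths do not repeat vertices, so a subpath `π i` of a path `l` is located by
the position of its first vertex `Iv i` in `l`. Two non-overlapping subpaths cannot interleave: the
one that starts first ends no later than the other starts. Hence a path containing every `π i`,
`i ∈ S`, contains them in exactly one order, that of their starting positions, and the paths are
partitioned according to this order. For a fixed order, cutting a path at the first and the last
vertex of each `π j` in turn is a bijection onto tuples of connecting paths, which gives the
product of path counts.
-/

/-- A directed path from `a` to `b` in the digraph with adjacency relation `adj`,
represented as its (nonempty) list of vertices. -/
def IsDiPath {V : Type*} (adj : V → V → Prop) (a b : V) (l : List V) : Prop :=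
  l.head? = some a ∧ l.getLast? = some b ∧ l.Chain' adj

/-- A digraph is acyclic if it contains no directed cycle. -/
def DigraphAcyclic {V : Type*} (adj : V → V → Prop) : Prop :=
  ∀ v : V, ¬ Relation.TransGen adj v v

/-- `Overlaps p₁ p₂` means that `p₂` overlaps `p₁`. -/
def Overlaps {V : Type*} (p₁ p₂ : List V) : Prop :=
  p₁ <:+: p₂ ∨ ∃ t : List V, 2 ≤ t.length ∧ t <:+ p₁ ∧ t <+: p₂

/-- For an ordering `L = [j₁, j₂, …]` of indices (to be traversed in this order),
the product `γ(s → I_{j₁}) · γ(F_{j₁} → I_{j₂}) · ⋯ · γ(F_{j_last} → F)`. -/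
def orderedProd {V : Type*} (γ : V → V → ℕ) {n : ℕ} (Iv Fv : Fin n → V) (F : V) :
    V → List (Fin n) → ℕ
  | s, [] => γ s F
  | s, j :: L => γ s (Iv j) * orderedProd γ Iv Fv F (Fv j) L

/-- `ContainsInOrder l ps` : the path `l` contains the paths in `ps` as subpaths,
occurring in this precise order along `l` (each next subpath occurring in the
remainder of `l` after the previous one finishes). -/
def ContainsInOrder {V : Type*} : List V → List (List V) → Prop
  | _, [] => True
  | l, p :: ps => ∃ s t : List V, l = s ++ p ++ t ∧ ContainsInOrder (p.getLast?.toList ++ t) ps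

open List

namespace List
variable {α : Type*}

theorem drop_length_add_length_sub_one {s p t : List α} (hp : p ≠ []) :
    (s ++ p ++ t).drop (s.length + p.length - 1) = p.getLast?.toList ++ t := by
  obtain ⟨q, x, rfl⟩ := (eq_nil_or_concat' p).resolve_left hp
  have : s ++ (q ++ [x]) ++ t = (s ++ q) ++ x :: t := by simp
  rw [this, show s.length + (q ++ [x]).length - 1 = (s ++ q).length by simp, drop_left]
  simp

theorem Nodup.idxOf_eq_length [DecidableEq α] {l s p t : List α} {x : α} (hl : l.Nodup)
    (h : s ++ p ++ t = l) (hx : p.head? = some x) : l.idxOf x = s.length := by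
  obtain ⟨q, rfl⟩ := head?_eq_some_iff.mp hx
  subst h
  rw [append_assoc] at hl ⊢
  have hxs : x ∉ s := fun h => (nodup_append.mp hl).2.2 x h x (by simp) rfl
  rw [idxOf_append_of_notMem hxs]
  simp

theorem Nodup.append_append_inj {s p t s' t' : List α} (hl : (s ++ p ++ t).Nodup)
    (h : s ++ p ++ t = s' ++ p ++ t') (hp : p ≠ []) : s = s' ∧ t = t' := by
  classical
  have hx := head?_eq_some_head hp
  have hlen : s.length = s'.length := by
    rw [← hl.idxOf_eq_length rfl hx, hl.idxOf_eq_length h.symm hx]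
  obtain ⟨rfl, hpt⟩ := append_inj (by simpa only [append_assoc] using h) hlen
  exact ⟨rfl, append_cancel_left hpt⟩

theorem idxOf_drop [DecidableEq α] {l : List α} {x : α} {k : ℕ} (hk : k ≤ l.idxOf x) :
    (l.drop k).idxOf x = l.idxOf x - k := by
  induction l generalizing k with
  | nil => simp
  | cons a l ih =>
    cases k with
    | zero => simp
    | succ k =>
      have hax : a ≠ x := by rintro rfl; simp at hk
      simp only [idxOf_cons_ne _ hax, drop_succ_cons] at hk ⊢
      rw [ih (by omega)]
      omega

theorem Nodup.infix_drop_iff [DecidableEq α] {l p : List α} {x : α} {k : ℕ} (hl : l.Nodup)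
    (hx : p.head? = some x) : p <:+: l.drop k ↔ p <:+: l ∧ k ≤ l.idxOf x := by
  constructor
  · rintro ⟨s, t, h⟩
    have hk : k ≤ l.length := by
      by_contra! hk
      rw [drop_eq_nil_of_le hk.le] at h
      simp_all
    have hdec : l = take k l ++ s ++ p ++ t := by
      rw [append_assoc (take k l ++ s), append_assoc, ← append_assoc s, h, take_append_drop]
    refine ⟨⟨take k l ++ s, t, hdec.symm⟩, ?_⟩
    rw [hl.idxOf_eq_length hdec.symm hx]
    simp [hk]
  · rintro ⟨⟨s, t, rfl⟩, hk⟩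
    rw [hl.idxOf_eq_length rfl hx] at hk
    refine ⟨s.drop k, t, ?_⟩
    rw [append_assoc, append_assoc, drop_append_of_le_length hk]

end List

theorem length_add_length_le_of_not_overlaps {α : Type*} {l p q s₁ t₁ s₂ t₂ : List α}
    (h₁ : l = s₁ ++ p ++ t₁) (h₂ : l = s₂ ++ q ++ t₂) (hle : s₁.length ≤ s₂.length)
    (hqp : ¬ Overlaps q p) (hpq : ¬ Overlaps p q) : s₁.length + p.length ≤ s₂.length + 1 := by
  by_contra! hlt
  set d := p.drop (s₂.length - s₁.length)
  -- `d` is the part of `p` from the start of `q` on; `q` and `d` are prefixes of the same list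
  have hrest : q ++ t₂ = d ++ t₁ := by
    have e₁ : l.drop s₂.length = q ++ t₂ := by rw [h₂, append_assoc, drop_left]
    have e₂ : l.drop s₂.length = d ++ t₁ := by
      rw [h₁, append_assoc, drop_append, drop_eq_nil_of_le hle, nil_append,
        drop_append_of_le_length (by omega)]
    rw [← e₁, e₂]
  have hd : 2 ≤ d.length := by simp only [d, length_drop]; omega
  rcases prefix_or_prefix_of_prefix (prefix_append q t₂) (hrest ▸ prefix_append d t₁) with h | h
  · exact hqp (Or.inl (h.isInfix.trans (drop_suffix _ _).isInfix))
  · exact hpq (Or.inr ⟨d, hd, drop_suffix _ _, h⟩)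

section ContainsInOrder
variable {α ι : Type*} [DecidableEq α] {π : ι → List α} {Iv : ι → α}

theorem containsInOrder_cons_iff (hI : ∀ i, (π i).head? = some (Iv i)) {l : List α}
    (hl : l.Nodup) (j : ι) (M : List ι) :
    ContainsInOrder l ((j :: M).map π) ↔
      π j <:+: l ∧ ContainsInOrder (l.drop (l.idxOf (Iv j) + (π j).length - 1)) (M.map π) := by
  have hj : π j ≠ [] := by rintro h; simpa [h] using hI j
  simp only [map_cons, ContainsInOrder]
  constructor
  · rintro ⟨s, t, rfl, h⟩
    refine ⟨⟨s, t, rfl⟩, ?_⟩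
    rwa [hl.idxOf_eq_length rfl (hI j), drop_length_add_length_sub_one hj]
  · rintro ⟨⟨s, t, rfl⟩, h⟩
    refine ⟨s, t, rfl, ?_⟩
    rwa [hl.idxOf_eq_length rfl (hI j), drop_length_add_length_sub_one hj] at h

theorem containsInOrder_map_iff (hI : ∀ i, (π i).head? = some (Iv i)) (M : List ι)
    {l : List α} (hl : l.Nodup) :
    ContainsInOrder l (M.map π) ↔ (∀ i ∈ M, π i <:+: l) ∧
      M.Pairwise (fun i j => l.idxOf (Iv i) + (π i).length ≤ l.idxOf (Iv j) + 1) := by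
  induction M generalizing l with
  | nil => simp [ContainsInOrder]
  | cons j M ih =>
    have hj : 0 < (π j).length := by
      rw [length_pos_iff]; rintro h; simpa [h] using hI j
    have hdrop : ∀ i, π i <:+: l.drop (l.idxOf (Iv j) + (π j).length - 1) ↔
        π i <:+: l ∧ l.idxOf (Iv j) + (π j).length ≤ l.idxOf (Iv i) + 1 := fun i => by
      rw [hl.infix_drop_iff (hI i)]
      exact and_congr_right fun _ => by omega
    rw [containsInOrder_cons_iff hI hl, ih (hl.sublist (drop_sublist _ _))]
    simp only [mem_cons, forall_eq_or_imp, pairwise_cons, hdrop]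
    have hshift (h : ∀ i ∈ M, l.idxOf (Iv j) + (π j).length ≤ l.idxOf (Iv i) + 1) :
        M.Pairwise (fun a b => (l.drop (l.idxOf (Iv j) + (π j).length - 1)).idxOf (Iv a) +
          (π a).length ≤ (l.drop (l.idxOf (Iv j) + (π j).length - 1)).idxOf (Iv b) + 1) ↔
        M.Pairwise (fun a b => l.idxOf (Iv a) + (π a).length ≤ l.idxOf (Iv b) + 1) := by
      refine Pairwise.iff_of_mem fun {a b} ha hb => ?_
      have := h a ha; have := h b hb
      rw [idxOf_drop (by omega), idxOf_drop (by omega)]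
      omega
    constructor
    · rintro ⟨hjl, hM, hpw⟩
      have hjM : ∀ i ∈ M, _ := fun i hi => (hM i hi).2
      exact ⟨⟨hjl, fun i hi => (hM i hi).1⟩, hjM, (hshift hjM).mp hpw⟩
    · rintro ⟨⟨hjl, hM⟩, hjM, hpw⟩
      exact ⟨hjl, fun i hi => ⟨hM i hi, hjM i hi⟩, (hshift hjM).mpr hpw⟩

end ContainsInOrder

section Paths
variable {V : Type*} {adj : V → V → Prop}

theorem isDiPath_iff {a b : V} {l : List V} :
    IsDiPath adj a b l ↔ l.head? = some a ∧ l.getLast? = some b ∧ l.IsChain adj :=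
  Iff.rfl

theorem DigraphAcyclic.nodup (hac : DigraphAcyclic adj) {l : List V} (hl : l.IsChain adj) :
    l.Nodup := by
  by_contra h
  obtain ⟨x, hx⟩ := exists_duplicate_iff_not_nodup.mpr h
  have : [x, x].IsChain (Relation.TransGen adj) :=
    (hl.imp fun _ _ => Relation.TransGen.single).sublist (duplicate_iff_sublist.mp hx)
  exact hac x (by simpa using this)

theorem DigraphAcyclic.finite_setOf_isDiPath [Fintype V] (hac : DigraphAcyclic adj) (a b : V) :
    {l : List V | IsDiPath adj a b l}.Finite :=
  (Set.finite_coe_iff.mp (inferInstance : Finite {l : List V // l.Nodup})).subset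
    fun _ hl => hac.nodup hl.2.2

theorem IsDiPath.ne_nil {a b : V} {l : List V} (h : IsDiPath adj a b l) : l ≠ [] := by
  rintro rfl; simpa using h.1

theorem IsDiPath.dropLast_append {a b : V} {l : List V} (h : IsDiPath adj a b l) :
    l.dropLast ++ [b] = l := by
  obtain ⟨l, rfl⟩ := getLast?_eq_some_iff.mp h.2.1
  simp

theorem IsDiPath.cons_tail {a b : V} {l : List V} (h : IsDiPath adj a b l) : a :: l.tail = l := by
  obtain ⟨l, rfl⟩ := head?_eq_some_iff.mp h.1
  rfl

theorem isDiPath_append_cons_iff {a c x : V} {u w : List V} :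
    IsDiPath adj a c (u ++ x :: w) ↔ IsDiPath adj a x (u ++ [x]) ∧ IsDiPath adj x c (x :: w) := by
  have hhead : (u ++ x :: w).head? = (u ++ [x]).head? := by cases u <;> simp
  rw [isDiPath_iff, isDiPath_iff, isDiPath_iff, hhead, getLast?_append_cons, isChain_split]
  simp only [head?_cons, getLast?_concat, true_and]
  tauto

theorem IsDiPath.isDiPath_append_append_iff {a c b₀ b₁ : V} {s p t : List V}
    (hp : IsDiPath adj b₀ b₁ p) :
    IsDiPath adj a c (s ++ p ++ t) ↔
      IsDiPath adj a b₀ (s ++ [b₀]) ∧ IsDiPath adj b₁ c (b₁ :: t) := by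
  have e₀ : s ++ p ++ t = s ++ b₀ :: (p.tail ++ t) := by rw [← hp.cons_tail]; simp
  have e₁ : b₀ :: (p.tail ++ t) = p.dropLast ++ b₁ :: t := by
    rw [← cons_append, hp.cons_tail, ← hp.dropLast_append]; simp
  rw [e₀, isDiPath_append_cons_iff, e₁, isDiPath_append_cons_iff (u := p.dropLast),
    hp.dropLast_append]
  simp [hp]

end Paths

section Counting
variable {V : Type*} {adj : V → V → Prop}

theorem DigraphAcyclic.ncard_isDiPath_through (hac : DigraphAcyclic adj) {b₀ b₁ : V}
    {p : List V} (hp : IsDiPath adj b₀ b₁ p) (a c : V) (Q : List V → Prop) :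
    {l | IsDiPath adj a c l ∧ ∃ s t, l = s ++ p ++ t ∧ Q (b₁ :: t)}.ncard =
      {u | IsDiPath adj a b₀ u}.ncard * {v | IsDiPath adj b₁ c v ∧ Q v}.ncard := by
  set A := {u | IsDiPath adj a b₀ u}
  set B := {v | IsDiPath adj b₁ c v ∧ Q v}
  have hp₀ : p ≠ [] := hp.ne_nil
  let glue : List V × List V → List V := fun w => w.1.dropLast ++ p ++ w.2.tail
  have himage : glue '' A ×ˢ B =
      {l | IsDiPath adj a c l ∧ ∃ s t, l = s ++ p ++ t ∧ Q (b₁ :: t)} := by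
    ext l
    constructor
    · rintro ⟨⟨u, v⟩, ⟨hu, hv, hQ⟩, rfl⟩
      refine ⟨?_, u.dropLast, v.tail, rfl, hv.cons_tail ▸ hQ⟩
      rw [hp.isDiPath_append_append_iff, hu.dropLast_append, hv.cons_tail]
      exact ⟨hu, hv⟩
    · rintro ⟨hl, s, t, rfl, hQ⟩
      obtain ⟨hs, ht⟩ := hp.isDiPath_append_append_iff.mp hl
      exact ⟨(s ++ [b₀], b₁ :: t), ⟨hs, ht, hQ⟩, by simp [glue]⟩
  have hinj : Set.InjOn glue (A ×ˢ B) := by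
    rintro ⟨u, v⟩ ⟨hu : IsDiPath adj a b₀ u, hv : IsDiPath adj b₁ c v, -⟩
      ⟨u', v'⟩ ⟨hu' : IsDiPath adj a b₀ u', hv' : IsDiPath adj b₁ c v', -⟩ h
    have hnd : (glue (u, v)).Nodup := hac.nodup
      (hp.isDiPath_append_append_iff.mpr ⟨by rwa [hu.dropLast_append], by rwa [hv.cons_tail]⟩).2.2
    obtain ⟨hs, ht⟩ := hnd.append_append_inj h hp₀
    rw [← hu.dropLast_append, ← hu'.dropLast_append, ← hv.cons_tail, ← hv'.cons_tail, hs, ht]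
  rw [← himage, hinj.ncard_image, Set.ncard_prod]

theorem DigraphAcyclic.orderedProd_eq_ncard (hac : DigraphAcyclic adj) {n : ℕ}
    {π : Fin n → List V} {Iv Fv : Fin n → V} (hπ : ∀ i, IsDiPath adj (Iv i) (Fv i) (π i))
    (F : V) (L : List (Fin n)) (s : V) :
    orderedProd (fun a b => {l | IsDiPath adj a b l}.ncard) Iv Fv F s L =
      {l | IsDiPath adj s F l ∧ ContainsInOrder l (L.map π)}.ncard := by
  induction L generalizing s with
  | nil => simp [orderedProd, ContainsInOrder]
  | cons j L ih =>
    have hlast : (π j).getLast?.toList = [Fv j] := by rw [(hπ j).2.1]; rfl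
    simp only [orderedProd, map_cons, ContainsInOrder, hlast, singleton_append]
    rw [ih]
    exact (hac.ncard_isDiPath_through (hπ j) s F fun v => ContainsInOrder v (L.map π)).symm

end Counting

section Ordering
variable {V ι : Type*} {π : ι → List V} {Iv : ι → V}
  (hI : ∀ i, (π i).head? = some (Iv i)) (hno : ∀ i j, i ≠ j → ¬ Overlaps (π i) (π j))
include hI hno

theorem end_le_start_of_idxOf_le [DecidableEq V] {l : List V} (hl : l.Nodup) {i j : ι}
    (hij : i ≠ j) (hi : π i <:+: l) (hj : π j <:+: l) (hle : l.idxOf (Iv i) ≤ l.idxOf (Iv j)) :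
    l.idxOf (Iv i) + (π i).length ≤ l.idxOf (Iv j) + 1 := by
  obtain ⟨s₁, t₁, h₁⟩ := hi
  obtain ⟨s₂, t₂, h₂⟩ := hj
  rw [hl.idxOf_eq_length h₁ (hI i), hl.idxOf_eq_length h₂ (hI j)] at hle ⊢
  exact length_add_length_le_of_not_overlaps h₁.symm h₂.symm hle (hno j i hij.symm) (hno i j hij)

theorem eq_of_end_le_start_of_end_le_start [DecidableEq V] {l : List V} {i j : ι}
    (hi : π i <:+: l) (hij : l.idxOf (Iv i) + (π i).length ≤ l.idxOf (Iv j) + 1)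
    (hji : l.idxOf (Iv j) + (π j).length ≤ l.idxOf (Iv i) + 1) : i = j := by
  by_contra hne
  have hpos : ∀ k, 0 < (π k).length := fun k => by
    rw [length_pos_iff]; rintro h; simpa [h] using hI k
  have hsingle : ∀ k, (π k).length = 1 → π k = [Iv k] := fun k hk => by
    obtain ⟨x, hx⟩ := length_eq_one_iff.mp hk
    simpa [hx] using hI k
  obtain ⟨hi₁, hj₁, hidx⟩ : (π i).length = 1 ∧ (π j).length = 1 ∧
      l.idxOf (Iv i) = l.idxOf (Iv j) := by
    have := hpos i; have := hpos j; omega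
  have hIv : Iv i = Iv j := (idxOf_inj (hi.subset (mem_of_mem_head? (hI i)))).mp hidx
  have hπ : π i = π j := by rw [hsingle i hi₁, hsingle j hj₁, hIv]
  exact hno i j hne (Or.inl (hπ ▸ infix_refl _))

theorem exists_mem_permutations_containsInOrder {l : List V} (hl : l.Nodup) (S : Finset ι)
    (hS : ∀ i ∈ S, π i <:+: l) : ∃ L ∈ S.toList.permutations, ContainsInOrder l (L.map π) := by
  classical
  let L := S.toList.mergeSort fun i j => decide (l.idxOf (Iv i) ≤ l.idxOf (Iv j))
  have hperm : L ~ S.toList := mergeSort_perm _ _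
  have hmem : ∀ i ∈ L, i ∈ S := fun i hi => Finset.mem_toList.mp (hperm.mem_iff.mp hi)
  have hsorted : L.Pairwise fun i j => l.idxOf (Iv i) ≤ l.idxOf (Iv j) := by
    simpa using pairwise_mergeSort (le := fun i j => decide (l.idxOf (Iv i) ≤ l.idxOf (Iv j)))
      (fun _ _ _ => by simpa using le_trans) (fun _ _ => by simpa using le_total _ _) S.toList
  refine ⟨L, mem_permutations.mpr hperm,
    (containsInOrder_map_iff hI L hl).mpr ⟨fun i hi => hS i (hmem i hi), ?_⟩⟩
  refine (hsorted.and (hperm.nodup_iff.mpr S.nodup_toList)).imp_of_mem ?_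
  rintro i j hi hj ⟨hle, hij⟩
  exact end_le_start_of_idxOf_le hI hno hl hij (hS i (hmem i hi)) (hS j (hmem j hj)) hle

theorem eq_of_containsInOrder {l : List V} (hl : l.Nodup) {L L' : List ι} (hLL' : L ~ L')
    (h : ContainsInOrder l (L.map π)) (h' : ContainsInOrder l (L'.map π)) : L = L' := by
  classical
  rw [containsInOrder_map_iff hI _ hl] at h h'
  exact hLL'.eq_of_pairwise (fun i j hi _ hij hji =>
    eq_of_end_le_start_of_end_le_start hI hno (h.1 i hi) hij hji) h.2 h'.2

end Ordering

theorem DigraphAcyclic.ncard_forall_infix_eq_sum {V ι : Type*} [Fintype V] [DecidableEq ι]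
    {adj : V → V → Prop} (hac : DigraphAcyclic adj) {π : ι → List V} {Iv Fv : ι → V}
    (hπ : ∀ i, IsDiPath adj (Iv i) (Fv i) (π i)) (hno : ∀ i j, i ≠ j → ¬ Overlaps (π i) (π j))
    (I F : V) (S : Finset ι) :
    {l | IsDiPath adj I F l ∧ ∀ i ∈ S, π i <:+: l}.ncard =
      (S.toList.permutations.map fun L =>
        {l | IsDiPath adj I F l ∧ ContainsInOrder l (L.map π)}.ncard).sum := by
  classical
  have hI : ∀ i, (π i).head? = some (Iv i) := fun i => (hπ i).1
  set E := fun L : List ι => {l | IsDiPath adj I F l ∧ ContainsInOrder l (L.map π)}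
  set P : Finset (List ι) := S.toList.permutations.toFinset
  have hunion : {l | IsDiPath adj I F l ∧ ∀ i ∈ S, π i <:+: l} = ⋃ L ∈ (P : Set (List ι)), E L := by
    ext l
    simp only [Set.mem_iUnion, Finset.mem_coe, P, mem_toFinset, exists_prop, E]
    constructor
    · rintro ⟨hl, hS⟩
      obtain ⟨L, hL, h⟩ := exists_mem_permutations_containsInOrder hI hno (hac.nodup hl.2.2) S hS
      exact ⟨L, hL, hl, h⟩
    · rintro ⟨L, hL, hl, h⟩
      refine ⟨hl, fun i hi => ((containsInOrder_map_iff hI L (hac.nodup hl.2.2)).mp h).1 i ?_⟩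
      exact (mem_permutations.mp hL).mem_iff.mpr (Finset.mem_toList.mpr hi)
  have hdisj : (P : Set (List ι)).PairwiseDisjoint E := by
    intro L hL L' hL' hne
    simp only [Finset.mem_coe, P, mem_toFinset, mem_permutations] at hL hL'
    refine Set.disjoint_left.mpr fun l hl hl' => hne ?_
    exact eq_of_containsInOrder hI hno (hac.nodup hl.1.2.2) (hL.trans hL'.symm) hl.2 hl'.2
  rw [hunion, P.finite_toSet.ncard_biUnion
    (fun L _ => (hac.finite_setOf_isDiPath I F).subset fun _ hl => hl.1) hdisj,
    finsum_mem_coe_finset, sum_toFinset _ (nodup_permutations _ S.nodup_toList)]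

theorem stmt3_general {V : Type*} [Fintype V] (adj : V → V → Prop) (hac : DigraphAcyclic adj)
    (I F : V) (n : ℕ) (π : Fin n → List V) (Iv Fv : Fin n → V)
    (hπ : ∀ i, IsDiPath adj (Iv i) (Fv i) (π i))
    (hno : ∀ i j : Fin n, i ≠ j → ¬ Overlaps (π i) (π j))
    (S : Finset (Fin n)) :
    (Set.ncard {l : List V | IsDiPath adj I F l ∧ ∀ i ∈ S, π i <:+: l} =
      ((S.toList.permutations).map
        (fun L => orderedProd (fun a b => Set.ncard {l : List V | IsDiPath adj a b l})
          Iv Fv F I L)).sum)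
    ∧ ∀ L ∈ S.toList.permutations,
        orderedProd (fun a b => Set.ncard {l : List V | IsDiPath adj a b l}) Iv Fv F I L =
          Set.ncard {l : List V | IsDiPath adj I F l ∧ ContainsInOrder l (L.map π)} := by
  have hγ := hac.orderedProd_eq_ncard hπ F
  refine ⟨?_, fun L _ => hγ L I⟩
  simp only [hγ]
  exact hac.ncard_forall_infix_eq_sum hπ hno I F S

/-- For a nonempty subset `S` of non-overlapping paths, the number of paths from `I` to `F`
containing every `πᵢ`, `i ∈ S`, as a subpath is the sum over all orderings of `S` of the
products `γ(I → I_{j}) · γ(F_{j} → I_{j'}) ⋯ γ(F_{last} → F)`; moreover each such product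
counts exactly the paths containing the corresponding subpaths in that precise order. -/
theorem stmt3 {V : Type*} [Fintype V] (adj : V → V → Prop) (hac : DigraphAcyclic adj)
    (I F : V) (n : ℕ) (π : Fin n → List V) (Iv Fv : Fin n → V)
    (hπ : ∀ i, IsDiPath adj (Iv i) (Fv i) (π i))
    (hno : ∀ i j : Fin n, i ≠ j → ¬ Overlaps (π i) (π j))
    (S : Finset (Fin n)) (hS : S.Nonempty) :
    (Set.ncard {l : List V | IsDiPath adj I F l ∧ ∀ i ∈ S, π i <:+: l} =
      ((S.toList.permutations).map
        (fun L => orderedProd (fun a b => Set.ncard {l : List V | IsDiPath adj a b l})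
          Iv Fv F I L)).sum)
    ∧ ∀ L ∈ S.toList.permutations,
        orderedProd (fun a b => Set.ncard {l : List V | IsDiPath adj a b l}) Iv Fv F I L =
          Set.ncard {l : List V | IsDiPath adj I F l ∧ ContainsInOrder l (L.map π)} :=
  stmt3_general adj hac I F n π Iv Fv hπ hno S
end

section
/- The number of north-east lattice paths in ℤ² from (x₁,y₁) to (x₂,y₂) that stay weakly above the diagonal x = y (assuming y₁ ≥ x₁ and y₂ ≥ x₂) equals C(x₂+y₂−x₁−y₁, x₂−x₁) − C(x₂+y₂−x₁−y₁, x₂−y₁−1) when x₁ ≤ x₂ and y₁ ≤ y₂, and equals 0 otherwise. -/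
/-!
Deleting the first point of a path from `a ≠ b` leaves a path from `a + (1, 0)` or from
`a + (0, 1)`, so the number of paths satisfies Pascal's recursion in `a`. The ballot number
`C(m, b.1 - a.1) - C(m, b.1 - a.2 - 1)`, `m = b.1 + b.2 - a.1 - a.2`, satisfies the same
recursion, equals `1` at `a = b`, and vanishes at the points `a.1 = a.2 + 1` just below the
diagonal, from which there are no paths; induction on `m` over all `a` with `a.1 ≤ a.2 + 1`
closes the argument.
-/

/-- A north-east unit step in the integer lattice. -/
def NEStep (p q : ℤ × ℤ) : Prop :=
  q = (p.1 + 1, p.2) ∨ q = (p.1, p.2 + 1)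

/-- A north-east lattice path from `a` to `b` staying weakly above the diagonal `x = y`,
represented as its (nonempty) list of lattice points. -/
def IsNEPathAbove (a b : ℤ × ℤ) (l : List (ℤ × ℤ)) : Prop :=
  l.head? = some a ∧ l.getLast? = some b ∧ l.Chain' NEStep ∧ ∀ p ∈ l, p.1 ≤ p.2

/-- The number of north-east lattice paths from `a` to `b` weakly above the diagonal. -/
noncomputable def latticeCount (a b : ℤ × ℤ) : ℕ :=
  Set.ncard {l : List (ℤ × ℤ) | IsNEPathAbove a b l}

/-- The binomial coefficient `C(n, k)` for integers, equal to `0` if `k < 0` or `k > n`. -/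
def intChoose (n k : ℤ) : ℕ :=
  if 0 ≤ k ∧ k ≤ n then n.toNat.choose k.toNat else 0

open Set

def nePathsAbove (a b : ℤ × ℤ) : Set (List (ℤ × ℤ)) := {l | IsNEPathAbove a b l}

lemma NEStep.fst_add_snd {p q : ℤ × ℤ} (h : NEStep p q) : q.1 + q.2 = p.1 + p.2 + 1 := by
  rcases h with rfl | rfl <;> dsimp <;> ring

lemma IsNEPathAbove.fst_add_snd_le {a b : ℤ × ℤ} {l : List (ℤ × ℤ)}
    (h : IsNEPathAbove a b l) : a.1 + a.2 ≤ b.1 + b.2 := by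
  obtain ⟨hhead, hlast, hchain, -⟩ := h
  refine List.IsChain.induction (fun p : ℤ × ℤ => a.1 + a.2 ≤ p.1 + p.2) l hchain
    (fun p q hpq hp => by linarith [hpq.fst_add_snd]) (fun hne => ?_) b
    (List.mem_of_getLast? hlast)
  rw [List.head?_eq_some_head hne, Option.some_inj] at hhead
  rw [hhead]

lemma isNEPathAbove_singleton {a b p : ℤ × ℤ} :
    IsNEPathAbove a b [p] ↔ p = a ∧ p = b ∧ p.1 ≤ p.2 := by
  simp [IsNEPathAbove, List.Chain']

lemma isNEPathAbove_cons_cons {a b p q : ℤ × ℤ} {t : List (ℤ × ℤ)} :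
    IsNEPathAbove a b (p :: q :: t) ↔
      p = a ∧ a.1 ≤ a.2 ∧ NEStep a q ∧ IsNEPathAbove q b (q :: t) := by
  simp only [IsNEPathAbove, List.Chain', List.isChain_cons_cons, List.head?_cons,
    Option.some_inj, List.getLast?_cons_cons, List.forall_mem_cons]
  constructor
  · rintro ⟨rfl, hlast, ⟨hstep, hchain⟩, hp, habove⟩
    exact ⟨rfl, hp, hstep, trivial, hlast, hchain, habove⟩
  · rintro ⟨rfl, hp, hstep, -, hlast, hchain, habove⟩
    exact ⟨rfl, hlast, ⟨hstep, hchain⟩, hp, habove⟩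

lemma nePathsAbove_eq_empty_of_lt {a b : ℤ × ℤ} (h : b.1 + b.2 < a.1 + a.2) :
    nePathsAbove a b = ∅ :=
  eq_empty_of_forall_notMem fun _ hl => hl.fst_add_snd_le.not_gt h

lemma nePathsAbove_eq_empty_of_snd_lt_fst {a b : ℤ × ℤ} (h : a.2 < a.1) :
    nePathsAbove a b = ∅ :=
  eq_empty_of_forall_notMem fun _ hl =>
    (hl.2.2.2 a (List.mem_of_mem_head? hl.1)).not_gt h

lemma nePathsAbove_self {a : ℤ × ℤ} (h : a.1 ≤ a.2) : nePathsAbove a a = {[a]} := by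
  ext l
  rcases l with _ | ⟨p, _ | ⟨q, t⟩⟩
  · simp [nePathsAbove, IsNEPathAbove]
  · simp only [nePathsAbove, mem_setOf_eq, isNEPathAbove_singleton, mem_singleton_iff,
      List.cons.injEq, and_true]
    constructor
    · exact fun h => h.1
    · rintro rfl
      exact ⟨rfl, rfl, h⟩
  · simp only [nePathsAbove, mem_setOf_eq, isNEPathAbove_cons_cons, mem_singleton_iff,
      List.cons.injEq, reduceCtorEq, and_false, iff_false]
    rintro ⟨-, -, hstep, hq⟩
    linarith [hq.fst_add_snd_le, hstep.fst_add_snd]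

lemma nePathsAbove_eq_image_cons {a b : ℤ × ℤ} (ha : a.1 ≤ a.2) (hab : a ≠ b) :
    nePathsAbove a b =
      (a :: ·) '' (nePathsAbove (a.1 + 1, a.2) b ∪ nePathsAbove (a.1, a.2 + 1) b) := by
  ext l
  constructor
  · intro hl
    rcases l with _ | ⟨p, _ | ⟨q, t⟩⟩
    · exact absurd hl.1 (by simp)
    · obtain ⟨rfl, rfl, -⟩ := isNEPathAbove_singleton.1 hl
      exact absurd rfl hab
    · obtain ⟨rfl, -, hstep, hq⟩ := isNEPathAbove_cons_cons.1 hl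
      refine ⟨q :: t, ?_, rfl⟩
      rcases hstep with rfl | rfl
      exacts [Or.inl hq, Or.inr hq]
  · rintro ⟨t, ht, rfl⟩
    obtain ⟨q, hstep, hq⟩ : ∃ q, NEStep a q ∧ IsNEPathAbove q b t := by
      rcases ht with ht | ht
      exacts [⟨_, Or.inl rfl, ht⟩, ⟨_, Or.inr rfl, ht⟩]
    obtain ⟨t, rfl⟩ := List.head?_eq_some_iff.1 hq.1
    exact isNEPathAbove_cons_cons.2 ⟨rfl, ha, hstep, hq⟩

lemma nePathsAbove_disjoint {a a' b : ℤ × ℤ} (h : a ≠ a') :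
    Disjoint (nePathsAbove a b) (nePathsAbove a' b) :=
  disjoint_left.2 fun _ h₁ h₂ => h (Option.some_injective _ (h₁.1.symm.trans h₂.1))

lemma intChoose_eq_zero {n k : ℤ} (h : k < 0 ∨ n < k) : intChoose n k = 0 :=
  if_neg (by omega)

lemma intChoose_natCast (n k : ℕ) : intChoose n k = n.choose k := by
  by_cases hk : k ≤ n
  · simp [intChoose, hk]
  · rw [intChoose_eq_zero (by omega), Nat.choose_eq_zero_of_lt (by omega)]

lemma intChoose_eq_add {n k : ℤ} (h : n ≠ 0 ∨ k ≠ 0) :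
    intChoose n k = intChoose (n - 1) (k - 1) + intChoose (n - 1) k := by
  by_cases hkn : k < 0 ∨ n < k
  · rw [intChoose_eq_zero hkn, intChoose_eq_zero (by omega), intChoose_eq_zero (by omega)]
  obtain ⟨n, rfl⟩ : ∃ n' : ℕ, n = (n' + 1 : ℕ) := ⟨(n - 1).toNat, by omega⟩
  obtain ⟨k, rfl⟩ : ∃ k' : ℕ, k = k' := ⟨k.toNat, by omega⟩
  rcases k with _ | k
  · rw [intChoose_eq_zero (k := ((0 : ℕ) : ℤ) - 1) (by omega), zero_add, Nat.cast_succ n,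
      add_sub_cancel_right, ← Nat.cast_succ, intChoose_natCast, intChoose_natCast,
      Nat.choose_zero_right, Nat.choose_zero_right]
  · rw [Nat.cast_succ n, add_sub_cancel_right, Nat.cast_succ k, add_sub_cancel_right,
      ← Nat.cast_succ, ← Nat.cast_succ, intChoose_natCast, intChoose_natCast, intChoose_natCast,
      Nat.choose_succ_succ']

/-- André's reflection: the subtracted term counts the paths to `b` from `(a.2 + 1, a.1 - 1)`,
the mirror image of `a` in the line `y = x - 1`. -/
def ballotNumber (a b : ℤ × ℤ) : ℤ :=
  intChoose (b.1 + b.2 - a.1 - a.2) (b.1 - a.1) - intChoose (b.1 + b.2 - a.1 - a.2) (b.1 - a.2 - 1)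

lemma ballotNumber_self {a : ℤ × ℤ} (h : a.1 ≤ a.2) : ballotNumber a a = 1 := by
  rw [ballotNumber, intChoose_eq_zero (k := a.1 - a.2 - 1) (by omega)]
  simp [intChoose]

lemma ballotNumber_eq_zero_of_lt {a b : ℤ × ℤ} (h : b.1 + b.2 < a.1 + a.2) :
    ballotNumber a b = 0 := by
  rw [ballotNumber, intChoose_eq_zero (by omega), intChoose_eq_zero (by omega), sub_self]

lemma ballotNumber_eq_zero_of_fst_eq {a b : ℤ × ℤ} (h : a.1 = a.2 + 1) :
    ballotNumber a b = 0 := by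
  rw [ballotNumber, show b.1 - a.2 - 1 = b.1 - a.1 by omega, sub_self]

lemma ballotNumber_eq_add {a b : ℤ × ℤ} (ha : a.1 ≤ a.2) (hb : b.1 ≤ b.2) (hab : a ≠ b) :
    ballotNumber a b = ballotNumber (a.1 + 1, a.2) b + ballotNumber (a.1, a.2 + 1) b := by
  have hne : b.1 ≠ a.1 ∨ b.2 ≠ a.2 := by
    by_contra! h
    exact hab (Prod.ext h.1.symm h.2.symm)
  rw [ballotNumber, intChoose_eq_add (k := b.1 - a.1) (by omega),
    intChoose_eq_add (k := b.1 - a.2 - 1) (by omega)]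
  simp only [ballotNumber, Nat.cast_add]
  ring_nf

theorem ncard_nePathsAbove {a b : ℤ × ℤ} (ha : a.1 ≤ a.2 + 1) (hb : b.1 ≤ b.2) :
    (nePathsAbove a b).Finite ∧ ((nePathsAbove a b).ncard : ℤ) = ballotNumber a b := by
  suffices ∀ n : ℕ, ∀ a : ℤ × ℤ, a.1 ≤ a.2 + 1 → b.1 + b.2 - a.1 - a.2 < n →
      (nePathsAbove a b).Finite ∧ ((nePathsAbove a b).ncard : ℤ) = ballotNumber a b from
    this (b.1 + b.2 - a.1 - a.2).toNat.succ a ha (by omega)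
  intro n
  induction n with
  | zero =>
    intro a _ hlt
    rw [nePathsAbove_eq_empty_of_lt (by omega), ballotNumber_eq_zero_of_lt (by omega)]
    simp
  | succ n ih =>
    intro a ha hlt
    obtain hdiag | ha := (by omega : a.1 = a.2 + 1 ∨ a.1 ≤ a.2)
    · rw [nePathsAbove_eq_empty_of_snd_lt_fst (by omega), ballotNumber_eq_zero_of_fst_eq hdiag]
      simp
    by_cases hab : a = b
    · subst hab
      rw [nePathsAbove_self ha, ballotNumber_self ha]
      simp
    have hlt' : b.1 + b.2 - a.1 - a.2 - 1 < n := by push_cast at hlt; omega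
    obtain ⟨hEfin, hE⟩ := ih (a.1 + 1, a.2) (by dsimp; omega) (by dsimp; omega)
    obtain ⟨hNfin, hN⟩ := ih (a.1, a.2 + 1) (by dsimp; omega) (by dsimp; omega)
    rw [nePathsAbove_eq_image_cons ha hab, ballotNumber_eq_add ha hb hab, ← hE, ← hN]
    refine ⟨(hEfin.union hNfin).image _, ?_⟩
    rw [ncard_image_of_injective _ List.cons_injective,
      ncard_union_eq (nePathsAbove_disjoint (by simp)) hEfin hNfin, Nat.cast_add]

/-- The number of north-east lattice paths from `(x₁,y₁)` to `(x₂,y₂)` weakly above the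
diagonal `x = y` equals `C(x₂+y₂−x₁−y₁, x₂−x₁) − C(x₂+y₂−x₁−y₁, x₂−y₁−1)` when
`x₁ ≤ x₂` and `y₁ ≤ y₂`, and `0` otherwise. -/
theorem stmt4 (x₁ y₁ x₂ y₂ : ℤ) (h₁ : x₁ ≤ y₁) (h₂ : x₂ ≤ y₂) :
    (latticeCount (x₁, y₁) (x₂, y₂) : ℤ) =
      if x₁ ≤ x₂ ∧ y₁ ≤ y₂ then
        (intChoose (x₂ + y₂ - x₁ - y₁) (x₂ - x₁) : ℤ) -
          (intChoose (x₂ + y₂ - x₁ - y₁) (x₂ - y₁ - 1) : ℤ)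
      else 0 := by
  obtain ⟨-, hcount⟩ :=
    ncard_nePathsAbove (a := (x₁, y₁)) (b := (x₂, y₂)) (by dsimp; omega) h₂
  change ((nePathsAbove _ _).ncard : ℤ) = _
  rw [hcount, ballotNumber]
  split_ifs with hmono
  · rfl
  · rw [intChoose_eq_zero (by omega), intChoose_eq_zero (by omega), Nat.cast_zero, sub_zero]
end

section
/- Let W be the symmetric group S_{n+1} (type A_n Weyl group), w ∈ W, and let N(w⁻¹) = {α_{i₁j₁},…,α_{i_kj_k}} be the inversion set of w⁻¹. Then the number of antichains in the root poset of type A_n that avoid all elements of N(w⁻¹) equals the determinant of the (k+1)×(k+1) matrix whose (r,s) entry for r,s ≤ k is 1 if r = s and otherwise the number of weakly-above-diagonal north-east lattice paths from (i_s, j_s+1) to (i_r−1, j_r), whose last column entries are the path counts from (0,1) to (i_r−1, j_r), and whose last row entries are the path counts from (i_s, j_s+1) to (n, n+1), with bottom-right entry the path count from (0,1) to (n,n+1). -/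
/-- `p = (i, j)` encodes the positive root `α_{ij} = α_i + ⋯ + α_j` of type `Aₙ`. -/
def IsRootA (n : ℕ) (p : ℕ × ℕ) : Prop :=
  1 ≤ p.1 ∧ p.1 ≤ p.2 ∧ p.2 ≤ n

/-- The root poset order of type `A`: `α_{ij} ≤ α_{kl}` iff `k ≤ i` and `j ≤ l`. -/
def rootLeA (p q : ℕ × ℕ) : Prop :=
  q.1 ≤ p.1 ∧ p.2 ≤ q.2

/-!
Two distinct positive roots `(i, j)` of type `A` are incomparable iff one lies strictly south-west
of the other, so an antichain is a chain for the strict south-west order. Writing `AC(R)` for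
the antichains of a set of roots `R`, and splitting them according to their south-west-most
element `s` in a set `S`, gives `#AC(R) = #AC(R \ S) + ∑ s, #AC(R_{<s} \ S) * #AC(R_{>s})`.
Antichains in a box of roots are counted by lattice paths (an antichain is the set of
east-then-north corners of a path); this follows from the same splitting with `S` the bottom row.

Taking `S = N(w⁻¹)` and for `R` the roots below the corner `(i_r - 1, j_r)` or below `(n, n + 1)`,
the splitting says that the path matrix `M` sends `(-x_1, …, -x_k, 1)` to `X • e_{k+1}`, where
`x_r` counts the `S`-avoiding antichains below `α_r` and `X` is the wanted count. By Cramer's rule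
`det M = X * det M'`, where `M'` is `M` with last column `e_{k+1}`; and `M'` is unitriangular once
the indices are ordered by `i_r`, because a path from `(i_s, j_s + 1)` to `(i_r - 1, j_r)` forces
`i_s < i_r`.
-/

open Finset

section LatticePaths

theorem isChain_neStep_bounds : ∀ {l : List (ℤ × ℤ)} {a b : ℤ × ℤ}, l.IsChain NEStep →
    l.head? = some a → l.getLast? = some b →
    a.1 ≤ b.1 ∧ a.2 ≤ b.2 ∧ (l.length : ℤ) = b.1 + b.2 - a.1 - a.2 + 1
  | [], _, _, _, ha, _ => by simp at ha
  | [x], _, _, _, ha, hb => by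
    simp only [List.head?_cons, List.getLast?_singleton, Option.some.injEq] at ha hb
    subst ha hb
    simp
  | x :: y :: t, _, _, hc, ha, hb => by
    rw [List.isChain_cons_cons] at hc
    obtain ⟨h1, h2, h3⟩ := isChain_neStep_bounds hc.2 rfl (by rwa [List.getLast?_cons_cons] at hb)
    simp only [List.head?_cons, Option.some.injEq] at ha
    subst ha
    simp only [List.length_cons, Nat.cast_add, Nat.cast_one] at h3 ⊢
    rcases hc.1 with rfl | rfl <;> dsimp only at h1 h2 h3 <;> refine ⟨?_, ?_, ?_⟩ <;> omega

namespace IsNEPathAbove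

variable {a b : ℤ × ℤ} {l : List (ℤ × ℤ)}

theorem bounds (h : IsNEPathAbove a b l) :
    a.1 ≤ b.1 ∧ a.2 ≤ b.2 ∧ (l.length : ℤ) = b.1 + b.2 - a.1 - a.2 + 1 :=
  isChain_neStep_bounds h.2.2.1 h.1 h.2.1

theorem start_above_diagonal (h : IsNEPathAbove a b l) : a.1 ≤ a.2 :=
  h.2.2.2 a (List.mem_of_mem_head? h.1)

theorem eq_singleton (h : IsNEPathAbove a a l) : l = [a] := by
  obtain ⟨-, -, hlen⟩ := h.bounds
  match l, h.1 with
  | [x], hx => simpa using hx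
  | _ :: _ :: _, _ => simp at hlen; omega

theorem cons_of_step {c : ℤ × ℤ} (hd : a.1 ≤ a.2) (hs : NEStep a c) (h : IsNEPathAbove c b l) :
    IsNEPathAbove a b (a :: l) := by
  obtain ⟨h1, h2, h3, h4⟩ := h
  obtain ⟨c', t, rfl⟩ := List.exists_cons_of_ne_nil (l := l) (by rintro rfl; simp at h1)
  simp only [List.head?_cons, Option.some.injEq] at h1
  subst h1
  refine ⟨rfl, by rwa [List.getLast?_cons_cons], List.isChain_cons_cons.2 ⟨hs, h3⟩, ?_⟩
  rintro p (_ | ⟨_, hp⟩)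
  exacts [hd, h4 p hp]

end IsNEPathAbove

theorem setOf_isNEPathAbove_eq_image {a b : ℤ × ℤ} (hne : a ≠ b) (hd : a.1 ≤ a.2) :
    {l | IsNEPathAbove a b l} =
      List.cons a '' ({l | IsNEPathAbove (a.1 + 1, a.2) b l} ∪
        {l | IsNEPathAbove (a.1, a.2 + 1) b l}) := by
  ext l
  constructor
  · rintro ⟨h1, h2, h3, h4⟩
    match l with
    | [] => simp at h1
    | [x] => simp_all
    | x :: y :: t =>
      simp only [List.head?_cons, Option.some.injEq] at h1
      subst h1
      rw [List.Chain', List.isChain_cons_cons] at h3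
      have hy : IsNEPathAbove y b (y :: t) :=
        ⟨rfl, by rwa [List.getLast?_cons_cons] at h2, h3.2,
          fun p hp => h4 p (List.mem_cons_of_mem _ hp)⟩
      refine ⟨y :: t, ?_, rfl⟩
      rcases h3.1 with rfl | rfl
      exacts [Or.inl hy, Or.inr hy]
  · rintro ⟨t, ht | ht, rfl⟩
    exacts [ht.cons_of_step hd (Or.inl rfl), ht.cons_of_step hd (Or.inr rfl)]

theorem finite_setOf_isNEPathAbove (a b : ℤ × ℤ) : {l | IsNEPathAbove a b l}.Finite := by
  by_cases hab : a = b
  · subst hab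
    exact (Set.finite_singleton [a]).subset fun l hl => IsNEPathAbove.eq_singleton hl
  by_cases hd : a.1 ≤ a.2
  · rcases lt_or_ge (a.1 + a.2) (b.1 + b.2) with hlt | hge
    · rw [setOf_isNEPathAbove_eq_image hab hd]
      exact ((finite_setOf_isNEPathAbove _ b).union (finite_setOf_isNEPathAbove _ b)).image _
    · refine Set.finite_empty.subset fun l hl => hab ?_
      obtain ⟨h1, h2, -⟩ := hl.bounds
      exact Prod.ext (by omega) (by omega)
  · exact Set.finite_empty.subset fun l hl => hd hl.start_above_diagonal
termination_by (b.1 + b.2 - a.1 - a.2).toNat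
decreasing_by all_goals omega

theorem latticeCount_eq_zero {a b : ℤ × ℤ} (h : ∀ l, ¬ IsNEPathAbove a b l) :
    latticeCount a b = 0 := by
  simp [latticeCount, h]

theorem latticeCount_eq_zero_of_snd_lt_fst {a b : ℤ × ℤ} (h : a.2 < a.1) :
    latticeCount a b = 0 :=
  latticeCount_eq_zero fun _ hl => h.not_ge hl.start_above_diagonal

theorem latticeCount_eq_zero_of_lt_or_lt {a b : ℤ × ℤ} (h : b.1 < a.1 ∨ b.2 < a.2) :
    latticeCount a b = 0 :=
  latticeCount_eq_zero fun _ hl => by have := hl.bounds; omega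

theorem latticeCount_self {a : ℤ × ℤ} (h : a.1 ≤ a.2) : latticeCount a a = 1 := by
  have : {l | IsNEPathAbove a a l} = {[a]} := by
    ext l
    refine ⟨IsNEPathAbove.eq_singleton, ?_⟩
    rintro rfl
    exact ⟨rfl, rfl, List.isChain_singleton _, by simpa using h⟩
  rw [latticeCount, this, Set.ncard_singleton]

theorem latticeCount_eq_add {a b : ℤ × ℤ} (hne : a ≠ b) (hd : a.1 ≤ a.2) :
    latticeCount a b = latticeCount (a.1 + 1, a.2) b + latticeCount (a.1, a.2 + 1) b := by
  have hdisj : Disjoint {l | IsNEPathAbove (a.1 + 1, a.2) b l}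
      {l | IsNEPathAbove (a.1, a.2 + 1) b l} :=
    Set.disjoint_left.2 fun l h₁ h₂ => by simpa using h₁.1.symm.trans h₂.1
  rw [latticeCount, setOf_isNEPathAbove_eq_image hne hd,
    Set.ncard_image_of_injective _ List.cons_injective,
    Set.ncard_union_eq hdisj (finite_setOf_isNEPathAbove _ _) (finite_setOf_isNEPathAbove _ _)]
  rfl

theorem latticeCount_horizontal {x z y : ℤ} (hxz : x ≤ z) (hzy : z ≤ y) :
    latticeCount (x, y) (z, y) = 1 := by
  rcases hxz.eq_or_lt with rfl | hlt
  · exact latticeCount_self hzy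
  · rw [latticeCount_eq_add (by simp [hlt.ne]) (by simp; omega)]
    dsimp only
    rw [latticeCount_eq_zero_of_lt_or_lt (a := (x, y + 1)) (by simp),
      latticeCount_horizontal (by omega : x + 1 ≤ z) hzy]
termination_by (z - x).toNat

theorem latticeCount_eq_sum_Icc {b : ℤ × ℤ} (x y : ℕ) (hy : (y : ℤ) < b.2) :
    latticeCount (x, y) b = ∑ i ∈ Icc x y, latticeCount (i, (y : ℤ) + 1) b := by
  by_cases hxy : x ≤ y
  · rw [latticeCount_eq_add (by simp [Prod.ext_iff]; omega) (by simpa),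
      ← Ioc_insert_left hxy, sum_insert left_notMem_Ioc, ← Icc_add_one_left_eq_Ioc, add_comm]
    have := latticeCount_eq_sum_Icc (x + 1) y hy
    push_cast at this
    rw [this]
  · rw [Icc_eq_empty hxy, latticeCount_eq_zero_of_snd_lt_fst (by simp; omega), sum_empty]
termination_by y + 1 - x

end LatticePaths

section RootAntichains

theorem isAntichain_rootLeA_iff {A : Set (ℕ × ℕ)} :
    IsAntichain rootLeA A ↔
      A.Pairwise fun p q => (p.1 < q.1 ∧ p.2 < q.2) ∨ (q.1 < p.1 ∧ q.2 < p.2) := by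
  refine ⟨fun h p hp q hq hpq => ?_, fun h p hp q hq hpq hle => ?_⟩
  · have h₁ : ¬ rootLeA p q := h hp hq hpq
    have h₂ : ¬ rootLeA q p := h hq hp hpq.symm
    have : p.1 ≠ q.1 ∨ p.2 ≠ q.2 := by
      contrapose! hpq
      exact Prod.ext hpq.1 hpq.2
    unfold rootLeA at h₁ h₂
    omega
  · have := h hp hq hpq
    unfold rootLeA at hle
    omega

theorem isAntichain_rootLeA_insert_union {s : ℕ × ℕ} {B C : Finset (ℕ × ℕ)}
    (hB : IsAntichain rootLeA (B : Set (ℕ × ℕ))) (hC : IsAntichain rootLeA (C : Set (ℕ × ℕ)))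
    (hBs : ∀ p ∈ B, p.1 < s.1 ∧ p.2 < s.2) (hCs : ∀ q ∈ C, s.1 < q.1 ∧ s.2 < q.2) :
    IsAntichain rootLeA (↑(insert s (B ∪ C)) : Set (ℕ × ℕ)) := by
  rw [isAntichain_rootLeA_iff] at hB hC ⊢
  rw [coe_insert, coe_union]
  refine Set.pairwise_insert.2 ⟨Set.pairwise_union.2 ⟨hB, hC, fun p hp q hq _ => ?_⟩,
    fun p hp _ => ?_⟩
  · have := hBs p hp
    have := hCs q hq
    omega
  · rcases hp with hp | hp
    · have := hBs p hp
      omega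
    · have := hCs p hp
      omega

open scoped Classical in
noncomputable def rootAntichains (R : Finset (ℕ × ℕ)) : Finset (Finset (ℕ × ℕ)) :=
  R.powerset.filter fun A => IsAntichain rootLeA (A : Set (ℕ × ℕ))

theorem mem_rootAntichains {R A : Finset (ℕ × ℕ)} :
    A ∈ rootAntichains R ↔ A ⊆ R ∧ IsAntichain rootLeA (A : Set (ℕ × ℕ)) := by
  classical
  simp [rootAntichains]

@[simp] theorem rootAntichains_empty : rootAntichains ∅ = {∅} := by
  ext A
  simp only [mem_rootAntichains, subset_empty, mem_singleton, and_iff_left_iff_imp]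
  rintro rfl
  simp

theorem natCard_antichains_eq_card_rootAntichains (R : Finset (ℕ × ℕ)) :
    Nat.card {A : Set (ℕ × ℕ) // A ⊆ R ∧ IsAntichain rootLeA A} = #(rootAntichains R) := by
  have : {A : Set (ℕ × ℕ) | A ⊆ R ∧ IsAntichain rootLeA A} =
      (fun B : Finset (ℕ × ℕ) => (B : Set (ℕ × ℕ))) '' ↑(rootAntichains R) := by
    ext A
    constructor
    · rintro ⟨hAR, hA⟩
      obtain ⟨B, rfl⟩ : ∃ B : Finset (ℕ × ℕ), ↑B = A :=
        ⟨(R.finite_toSet.subset hAR).toFinset, by simp⟩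
      exact ⟨B, mem_rootAntichains.2 ⟨coe_subset.1 hAR, hA⟩, rfl⟩
    · rintro ⟨B, hB, rfl⟩
      exact ⟨coe_subset.2 (mem_rootAntichains.1 hB).1, (mem_rootAntichains.1 hB).2⟩
  rw [← Set.ncard_coe_finset, ← Set.ncard_image_of_injective _ coe_injective, ← this]
  rfl

theorem insert_filter_union_filter_eq {A : Finset (ℕ × ℕ)} {s : ℕ × ℕ}
    (hA : IsAntichain rootLeA (A : Set (ℕ × ℕ))) (hs : s ∈ A) :
    insert s (A.filter (fun p => p.1 < s.1 ∧ p.2 < s.2) ∪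
      A.filter fun q => s.1 < q.1 ∧ s.2 < q.2) = A := by
  ext p
  simp only [mem_insert, mem_union, mem_filter]
  refine ⟨?_, fun hp => ?_⟩
  · rintro (rfl | ⟨hp, -⟩ | ⟨hp, -⟩) <;> assumption
  · by_cases hps : p = s
    · exact Or.inl hps
    · rcases isAntichain_rootLeA_iff.1 hA hp hs hps with h | h
      exacts [Or.inr (Or.inl ⟨hp, h⟩), Or.inr (Or.inr ⟨hp, h⟩)]

section InsertUnion

variable {s : ℕ × ℕ} {B C : Finset (ℕ × ℕ)}

theorem filter_insert_union_southWest (hBs : ∀ p ∈ B, p.1 < s.1 ∧ p.2 < s.2)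
    (hCs : ∀ q ∈ C, s.1 < q.1 ∧ s.2 < q.2) :
    (insert s (B ∪ C)).filter (fun p => p.1 < s.1 ∧ p.2 < s.2) = B := by
  rw [filter_insert, if_neg (by omega), filter_union, filter_true_of_mem hBs,
    filter_false_of_mem fun q hq => by have := hCs q hq; omega, union_empty]

theorem filter_insert_union_northEast (hBs : ∀ p ∈ B, p.1 < s.1 ∧ p.2 < s.2)
    (hCs : ∀ q ∈ C, s.1 < q.1 ∧ s.2 < q.2) :
    (insert s (B ∪ C)).filter (fun q => s.1 < q.1 ∧ s.2 < q.2) = C := by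
  rw [filter_insert, if_neg (by omega), filter_union, filter_true_of_mem hCs,
    filter_false_of_mem fun p hp => by have := hBs p hp; omega, empty_union]

end InsertUnion

open scoped Classical in
noncomputable def antichainsWithLeast (R S : Finset (ℕ × ℕ)) (s : ℕ × ℕ) :
    Finset (Finset (ℕ × ℕ)) :=
  (rootAntichains R).filter fun A => s ∈ A ∧ ∀ t ∈ A, t ∈ S → ¬ (t.1 < s.1 ∧ t.2 < s.2)

theorem card_antichainsWithLeast {R S : Finset (ℕ × ℕ)} {s : ℕ × ℕ} (hs : s ∈ R) :
    #(antichainsWithLeast R S s) =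
      #(rootAntichains (R.filter (fun p => p.1 < s.1 ∧ p.2 < s.2) \ S)) *
        #(rootAntichains (R.filter fun q => s.1 < q.1 ∧ s.2 < q.2)) := by
  classical
  rw [← card_product]
  refine card_nbij' (fun A => (A.filter fun p => p.1 < s.1 ∧ p.2 < s.2,
      A.filter fun q => s.1 < q.1 ∧ s.2 < q.2)) (fun BC => insert s (BC.1 ∪ BC.2))
    (fun A hA => ?_) (fun BC hBC => ?_) (fun A hA => ?_) (fun BC hBC => ?_) <;>
  simp only [antichainsWithLeast, coe_product, Set.mem_prod, mem_coe, mem_filter,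
    mem_rootAntichains, subset_iff, mem_sdiff] at *
  · obtain ⟨⟨hAR, hA⟩, -, hleast⟩ := hA
    exact ⟨⟨fun p hp => ⟨⟨hAR hp.1, hp.2⟩, fun hpS => hleast p hp.1 hpS hp.2⟩,
      hA.subset fun p hp => (mem_filter.1 hp).1⟩,
      ⟨fun q hq => ⟨hAR hq.1, hq.2⟩, hA.subset fun q hq => (mem_filter.1 hq).1⟩⟩
  · obtain ⟨⟨hBR, hB⟩, ⟨hCR, hC⟩⟩ := hBC
    have hCs (q) (hq : q ∈ BC.2) := (hCR hq).2
    refine ⟨⟨fun p hp => ?_, isAntichain_rootLeA_insert_union hB hC (fun p hp => (hBR hp).1.2)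
      hCs⟩, mem_insert_self _ _, fun t ht htS hts => ?_⟩
    · rcases mem_insert.1 hp with rfl | hp
      · exact hs
      rcases mem_union.1 hp with hp | hp
      exacts [(hBR hp).1.1, (hCR hp).1]
    · rcases mem_insert.1 ht with rfl | ht
      · omega
      rcases mem_union.1 ht with ht | ht
      · exact (hBR ht).2 htS
      · have := hCs t ht
        omega
  · exact insert_filter_union_filter_eq hA.1.2 hA.2.1
  · have hBs (p) (hp : p ∈ BC.1) := (hBC.1.1 hp).1.2
    have hCs (q) (hq : q ∈ BC.2) := (hBC.2.1 hq).2
    exact Prod.ext (filter_insert_union_southWest hBs hCs) (filter_insert_union_northEast hBs hCs)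

theorem card_rootAntichains_eq_add_sum (R S : Finset (ℕ × ℕ)) :
    #(rootAntichains R) = #(rootAntichains (R \ S)) +
      ∑ s ∈ R ∩ S, #(rootAntichains (R.filter (fun p => p.1 < s.1 ∧ p.2 < s.2) \ S)) *
        #(rootAntichains (R.filter fun q => s.1 < q.1 ∧ s.2 < q.2)) := by
  classical
  have hdisjoint : (rootAntichains R).filter (fun A => Disjoint A S) = rootAntichains (R \ S) := by
    ext A
    simp only [mem_filter, mem_rootAntichains, subset_sdiff]
    tauto
  have hmeet : (rootAntichains R).filter (fun A => ¬ Disjoint A S) =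
      (R ∩ S).biUnion (antichainsWithLeast R S) := by
    ext A
    simp only [mem_filter, mem_biUnion, antichainsWithLeast, mem_inter, mem_rootAntichains]
    constructor
    · rintro ⟨⟨hAR, hA⟩, hAS⟩
      obtain ⟨s, hs, hmin⟩ :=
        exists_min_image (A ∩ S) Prod.fst (not_disjoint_iff_nonempty_inter.1 hAS)
      obtain ⟨hsA, hsS⟩ := mem_inter.1 hs
      exact ⟨s, ⟨hAR hsA, hsS⟩, ⟨hAR, hA⟩, hsA,
        fun t htA htS hts => (hmin t (mem_inter.2 ⟨htA, htS⟩)).not_gt hts.1⟩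
    · rintro ⟨s, ⟨-, hsS⟩, hA, hsA, -⟩
      exact ⟨hA, not_disjoint_iff.2 ⟨s, hsA, hsS⟩⟩
  have hpairwise : (↑(R ∩ S) : Set (ℕ × ℕ)).PairwiseDisjoint (antichainsWithLeast R S) := by
    intro s hs' t ht' hst
    refine disjoint_left.2 fun A hs ht => ?_
    simp only [antichainsWithLeast, mem_filter, mem_rootAntichains] at hs ht
    rcases isAntichain_rootLeA_iff.1 hs.1.2 hs.2.1 ht.2.1 hst with h | h
    exacts [ht.2.2 s hs.2.1 (mem_inter.1 hs').2 h, hs.2.2 t ht.2.1 (mem_inter.1 ht').2 h]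
  rw [← card_filter_add_card_filter_not (fun A => Disjoint A S), hdisjoint, hmeet,
    card_biUnion hpairwise]
  congr 1
  exact sum_congr rfl fun s hs => card_antichainsWithLeast (mem_inter.1 hs).1

end RootAntichains

section RootBox

/-- The possible east-then-north corners of a lattice path from `a` to `b`. -/
def rootBox (a b : ℕ × ℕ) : Finset (ℕ × ℕ) :=
  (Ioc a.1 b.1 ×ˢ Ico a.2 b.2).filter fun p => p.1 ≤ p.2

theorem mem_rootBox {a b p : ℕ × ℕ} :
    p ∈ rootBox a b ↔ a.1 < p.1 ∧ p.1 ≤ b.1 ∧ a.2 ≤ p.2 ∧ p.2 < b.2 ∧ p.1 ≤ p.2 := by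
  simp [rootBox, and_assoc]

theorem rootBox_eq_empty {a b : ℕ × ℕ} (h : b.2 ≤ a.2) : rootBox a b = ∅ :=
  eq_empty_of_forall_notMem fun p hp => by rw [mem_rootBox] at hp; omega

theorem filter_rootBox_southWest {a b s : ℕ × ℕ} (hs : s ∈ rootBox a b) :
    (rootBox a b).filter (fun p => p.1 < s.1 ∧ p.2 < s.2) = rootBox a (s.1 - 1, s.2) := by
  rw [mem_rootBox] at hs
  ext p
  simp only [mem_filter, mem_rootBox]
  omega

theorem filter_rootBox_northEast {a b s : ℕ × ℕ} (hs : s ∈ rootBox a b) :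
    (rootBox a b).filter (fun q => s.1 < q.1 ∧ s.2 < q.2) = rootBox (s.1, s.2 + 1) b := by
  rw [mem_rootBox] at hs
  ext p
  simp only [mem_filter, mem_rootBox]
  omega

theorem rootBox_sdiff_filter_snd_eq (x y : ℕ) (b : ℕ × ℕ) :
    rootBox (x, y) b \ (rootBox (x, y) b).filter (fun p => p.2 = y) = rootBox (x, y + 1) b := by
  ext p
  simp only [mem_sdiff, mem_filter, mem_rootBox]
  omega

theorem filter_rootBox_snd_eq {x y : ℕ} {b : ℕ × ℕ} (hy : y < b.2) :
    (rootBox (x, y) b).filter (fun p => p.2 = y) =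
      ((Ioc x y).filter (· ≤ b.1)).image fun i => (i, y) := by
  ext ⟨i, j⟩
  simp only [mem_filter, mem_rootBox, mem_image, mem_Ioc, Prod.mk.injEq]
  constructor
  · rintro ⟨h, rfl⟩
    exact ⟨i, by omega, rfl, rfl⟩
  · rintro ⟨i, h, rfl, rfl⟩
    omega

theorem card_rootAntichains_rootBox (x y : ℕ) {b : ℕ × ℕ} (hxy : x ≤ y) (hx : x ≤ b.1)
    (hy : y ≤ b.2) (hb : b.1 < b.2) :
    #(rootAntichains (rootBox (x, y) b)) = latticeCount (x, y) (b.1, b.2) := by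
  rcases hy.lt_or_eq with hy | rfl
  swap
  · rw [rootBox_eq_empty (show b.2 ≤ (x, b.2).2 from le_rfl), rootAntichains_empty,
      card_singleton, latticeCount_horizontal (by omega) (by omega)]
  have hterm : ∀ s ∈ (rootBox (x, y) b).filter (fun p => p.2 = y),
      #(rootAntichains ((rootBox (x, y) b).filter (fun p => p.1 < s.1 ∧ p.2 < s.2) \
          (rootBox (x, y) b).filter fun p => p.2 = y)) *
        #(rootAntichains ((rootBox (x, y) b).filter fun q => s.1 < q.1 ∧ s.2 < q.2)) =
      latticeCount (s.1, (y : ℤ) + 1) (b.1, b.2) := by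
    intro s hs
    obtain ⟨hsR, hsy⟩ := mem_filter.1 hs
    have hs' := mem_rootBox.1 hsR
    rw [filter_rootBox_southWest hsR, filter_rootBox_northEast hsR,
      rootBox_eq_empty (by simp; omega), empty_sdiff, rootAntichains_empty, card_singleton,
      one_mul, card_rootAntichains_rootBox s.1 (s.2 + 1) (by omega) hs'.2.1 (by omega) hb, hsy]
    push_cast
    rfl
  rw [card_rootAntichains_eq_add_sum _ ((rootBox (x, y) b).filter fun p => p.2 = y),
    inter_eq_right.2 (filter_subset _ _), sum_congr rfl hterm, rootBox_sdiff_filter_snd_eq,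
    card_rootAntichains_rootBox x (y + 1) (by omega) hx hy hb,
    latticeCount_eq_sum_Icc x y (by simpa), ← Ioc_insert_left hxy, sum_insert left_notMem_Ioc,
    filter_rootBox_snd_eq hy, sum_image (by simp)]
  push_cast
  congr 1
  refine sum_filter_of_ne fun i _ hi => ?_
  by_contra h
  exact hi (latticeCount_eq_zero_of_lt_or_lt (by simp; omega))
termination_by b.2 - y

theorem latticeCount_eq_card_add_sum {a b : ℕ × ℕ} (S : Finset (ℕ × ℕ)) (ha : a.1 ≤ a.2)
    (hab : a.1 ≤ b.1 ∧ a.2 ≤ b.2) (hb : b.1 < b.2)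
    (hS : ∀ s ∈ S, a.1 < s.1 ∧ a.2 ≤ s.2 ∧ s.1 ≤ s.2) :
    latticeCount (a.1, a.2) (b.1, b.2) = #(rootAntichains (rootBox a b \ S)) +
      ∑ s ∈ S, #(rootAntichains (rootBox a (s.1 - 1, s.2) \ S)) *
        latticeCount (s.1, (s.2 : ℤ) + 1) (b.1, b.2) := by
  obtain ⟨x, y⟩ := a
  rw [← card_rootAntichains_rootBox x y ha hab.1 hab.2 hb, card_rootAntichains_eq_add_sum _ S]
  congr 1
  rw [← sum_subset (inter_subset_right (s₁ := rootBox (x, y) b) (s₂ := S))]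
  · refine sum_congr rfl fun s hs => ?_
    have hsR := (mem_inter.1 hs).1
    have hs' := mem_rootBox.1 hsR
    rw [filter_rootBox_southWest hsR, filter_rootBox_northEast hsR,
      card_rootAntichains_rootBox s.1 (s.2 + 1) (by omega) hs'.2.1 (by omega) hb]
    push_cast
    rfl
  · intro s hsS hs
    have := hS s hsS
    have hsR : s ∉ rootBox (x, y) b := fun h => hs (mem_inter.2 ⟨h, hsS⟩)
    rw [mem_rootBox] at hsR
    rw [latticeCount_eq_zero_of_lt_or_lt (by simp; omega), mul_zero]

end RootBox

section MatrixLemmas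

open Matrix

variable {m R : Type*} [Fintype m] [DecidableEq m] [CommRing R]

theorem Matrix.det_eq_mul_det_updateCol_single {M : Matrix m m R} {v : m → R} {i : m} {c : R}
    (hv : v i = 1) (hMv : M *ᵥ v = Pi.single i c) :
    M.det = c * (M.updateCol i (Pi.single i 1)).det := by
  have hcol : (fun k => ∑ j, v j • M k j) = c • Pi.single i 1 := by
    rw [← Pi.single_smul, smul_eq_mul, mul_one, ← hMv]
    ext k
    simp [Matrix.mulVec, dotProduct, mul_comm]
  rw [← Matrix.det_updateCol_smul, ← hcol, Matrix.det_updateCol_sum, hv, one_smul]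

theorem Matrix.det_eq_one_of_unitriangular {α : Type*} [LinearOrder α] {M : Matrix m m R}
    (b : m → α) (hdiag : ∀ i, M i i = 1) (hlt : ∀ i j, i ≠ j → M i j ≠ 0 → b j < b i) :
    M.det = 1 := by
  have hM : M.BlockTriangular (OrderDual.toDual ∘ b) := fun i j hij => by
    by_contra h
    obtain rfl | hne := eq_or_ne i j
    · exact lt_irrefl _ hij
    · exact (hlt i j hne h).not_gt hij
  rw [hM.det]
  refine prod_eq_one fun a _ => ?_
  have : M.toSquareBlock (OrderDual.toDual ∘ b) a = 1 := by
    ext ⟨i, hi⟩ ⟨j, hj⟩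
    rw [toSquareBlock_def, of_apply]
    obtain rfl | hne := eq_or_ne i j
    · rw [one_apply_eq, hdiag]
    · rw [one_apply_ne (by simpa using hne)]
      by_contra h
      exact (hlt i j hne h).ne (OrderDual.toDual.injective (hj.trans hi.symm))
  rw [this, Matrix.det_one]

end MatrixLemmas

section PathMatrix

open Matrix

variable {n k : ℕ} {ρ : Fin k → ℕ × ℕ}

noncomputable def pathMatrix (n : ℕ) {k : ℕ} (ρ : Fin k → ℕ × ℕ) :
    Matrix (Fin (k + 1)) (Fin (k + 1)) ℤ :=
  Matrix.of fun r s : Fin (k + 1) =>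
    if hr : (r : ℕ) < k then
      if hs : (s : ℕ) < k then
        if (r : ℕ) = (s : ℕ) then (1 : ℤ)
        else (latticeCount (((ρ ⟨s, hs⟩).1 : ℤ), ((ρ ⟨s, hs⟩).2 : ℤ) + 1)
          (((ρ ⟨r, hr⟩).1 : ℤ) - 1, ((ρ ⟨r, hr⟩).2 : ℤ)) : ℤ)
      else (latticeCount (0, 1)
        (((ρ ⟨r, hr⟩).1 : ℤ) - 1, ((ρ ⟨r, hr⟩).2 : ℤ)) : ℤ)
    else
      if hs : (s : ℕ) < k then
        (latticeCount (((ρ ⟨s, hs⟩).1 : ℤ), ((ρ ⟨s, hs⟩).2 : ℤ) + 1)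
          ((n : ℤ), (n : ℤ) + 1) : ℤ)
      else (latticeCount (0, 1) ((n : ℤ), (n : ℤ) + 1) : ℤ)

@[simp] theorem pathMatrix_castSucc_castSucc (r s : Fin k) :
    pathMatrix n ρ r.castSucc s.castSucc =
      if r = s then 1 else (latticeCount ((ρ s).1, ((ρ s).2 : ℤ) + 1)
        ((ρ r).1 - 1, (ρ r).2) : ℤ) := by
  simp [pathMatrix, Fin.val_eq_val]

@[simp] theorem pathMatrix_castSucc_last (r : Fin k) :
    pathMatrix n ρ r.castSucc (Fin.last k) = latticeCount (0, 1) ((ρ r).1 - 1, (ρ r).2) := by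
  simp [pathMatrix]

@[simp] theorem pathMatrix_last_castSucc (s : Fin k) :
    pathMatrix n ρ (Fin.last k) s.castSucc =
      latticeCount ((ρ s).1, ((ρ s).2 : ℤ) + 1) (n, n + 1) := by
  simp [pathMatrix]

@[simp] theorem pathMatrix_last_last :
    pathMatrix n ρ (Fin.last k) (Fin.last k) = latticeCount (0, 1) (n, n + 1) := by
  simp [pathMatrix]

noncomputable def avoidingAntichainCount (S : Finset (ℕ × ℕ)) (b : ℕ × ℕ) : ℕ :=
  #(rootAntichains (rootBox (0, 1) b \ S))

theorem latticeCount_eq_avoidingAntichainCount_add_sum (hinj : Function.Injective ρ)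
    (hroot : ∀ m, 1 ≤ (ρ m).1 ∧ (ρ m).1 ≤ (ρ m).2) {b : ℕ × ℕ} (hb : b.1 < b.2) :
    (latticeCount (0, 1) (b.1, b.2) : ℤ) = avoidingAntichainCount (univ.image ρ) b +
      ∑ m, (avoidingAntichainCount (univ.image ρ) ((ρ m).1 - 1, (ρ m).2) : ℤ) *
        latticeCount ((ρ m).1, ((ρ m).2 : ℤ) + 1) (b.1, b.2) := by
  have h := latticeCount_eq_card_add_sum (a := (0, 1)) (univ.image ρ) (by simp) (by simp; omega) hb
    (by simpa using fun m => ⟨(hroot m).1, (hroot m).1.trans (hroot m).2, (hroot m).2⟩)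
  rw [sum_image fun _ _ _ _ h => hinj h] at h
  exact_mod_cast h

theorem pathMatrix_mulVec (hinj : Function.Injective ρ)
    (hroot : ∀ m, 1 ≤ (ρ m).1 ∧ (ρ m).1 ≤ (ρ m).2) :
    pathMatrix n ρ *ᵥ Fin.snoc
        (fun m => -(avoidingAntichainCount (univ.image ρ) ((ρ m).1 - 1, (ρ m).2) : ℤ)) 1 =
      Pi.single (Fin.last k) (avoidingAntichainCount (univ.image ρ) (n, n + 1) : ℤ) := by
  ext r
  simp only [mulVec, dotProduct, Fin.sum_univ_castSucc, Fin.snoc_castSucc, Fin.snoc_last, mul_one,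
    mul_neg, sum_neg_distrib]
  cases r using Fin.lastCases with
  | last =>
    have h := latticeCount_eq_avoidingAntichainCount_add_sum (b := (n, n + 1)) hinj hroot
      (by simp)
    push_cast at h
    simp only [pathMatrix_last_castSucc, pathMatrix_last_last, h, Pi.single_eq_same]
    simp [mul_comm]
  | cast r =>
    have hr := hroot r
    have h := latticeCount_eq_avoidingAntichainCount_add_sum (b := ((ρ r).1 - 1, (ρ r).2)) hinj
      hroot (by simp; omega)
    push_cast [Nat.cast_sub hr.1] at h
    have hdiag : ∀ s, (if r = s then 1 else (latticeCount ((ρ s).1, ((ρ s).2 : ℤ) + 1)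
        ((ρ r).1 - 1, (ρ r).2) : ℤ)) =
        latticeCount ((ρ s).1, ((ρ s).2 : ℤ) + 1) ((ρ r).1 - 1, (ρ r).2) +
          if r = s then 1 else 0 := by
      intro s
      split_ifs with hrs
      · rw [hrs, latticeCount_eq_zero_of_lt_or_lt (Or.inl (by simp)), Nat.cast_zero, zero_add]
      · rw [add_zero]
    simp only [pathMatrix_castSucc_castSucc, pathMatrix_castSucc_last, h, hdiag, add_mul,
      sum_add_distrib, ite_mul, one_mul, zero_mul, sum_ite_eq, mem_univ, if_true,
      Pi.single_eq_of_ne (Fin.castSucc_ne_last r)]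
    simp only [mul_comm]
    ring

theorem det_pathMatrix_updateCol_last (hn : ∀ m, (ρ m).1 ≤ n) :
    ((pathMatrix n ρ).updateCol (Fin.last k) (Pi.single (Fin.last k) 1)).det = 1 := by
  refine det_eq_one_of_unitriangular (Fin.lastCases (n + 1) fun m => (ρ m).1) (fun i => ?_)
    (fun i j hij h => ?_)
  · cases i using Fin.lastCases with
    | last => simp
    | cast r => simp
  · cases j using Fin.lastCases with
    | last => simp [hij] at h
    | cast s =>
      rw [updateCol_ne (Fin.castSucc_ne_last s)] at h
      cases i using Fin.lastCases with
      | last => simpa using Nat.lt_succ_of_le (hn s)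
      | cast r =>
        have hrs : r ≠ s := fun hrs => hij (hrs ▸ rfl)
        simp only [pathMatrix_castSucc_castSucc, if_neg hrs, ne_eq, Nat.cast_eq_zero] at h
        simp only [Fin.lastCases_castSucc]
        by_contra hle
        exact h (latticeCount_eq_zero_of_lt_or_lt (Or.inl (by simp; omega)))

end PathMatrix

theorem mem_rootBox_iff_isRootA {n : ℕ} {p : ℕ × ℕ} :
    p ∈ rootBox (0, 1) (n, n + 1) ↔ IsRootA n p := by
  rw [mem_rootBox, IsRootA]
  omega

theorem subset_rootBox_sdiff_image_iff {n k : ℕ} {ρ : Fin k → ℕ × ℕ} {A : Set (ℕ × ℕ)} :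
    A ⊆ ↑(rootBox (0, 1) (n, n + 1) \ univ.image ρ) ↔ (∀ p ∈ A, IsRootA n p) ∧ ∀ m, ρ m ∉ A := by
  refine ⟨fun h => ⟨fun p hp => mem_rootBox_iff_isRootA.1 (mem_sdiff.1 (h hp)).1,
    fun m hm => (mem_sdiff.1 (h hm)).2 (mem_image_of_mem ρ (mem_univ m))⟩, ?_⟩
  rintro ⟨hroot, hρ⟩ p hp
  refine mem_sdiff.2 ⟨mem_rootBox_iff_isRootA.2 (hroot p hp), ?_⟩
  rw [mem_image]
  rintro ⟨m, -, rfl⟩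
  exact hρ m hp

/-- Let `w ∈ S_{n+1}` and let `ρ` enumerate (without repetition) the inversion set
`N(w⁻¹)` of `w⁻¹`, viewed as the set of positive roots `α_{ij}` (with `1 ≤ i ≤ j ≤ n`)
such that `w(i) > w(j+1)` in one-line positions (0-indexed: `w ⟨i-1⟩ > w ⟨j⟩`).
Then the number of antichains in the type `Aₙ` root poset avoiding all elements of
`N(w⁻¹)` equals the determinant of the `(k+1) × (k+1)` matrix of weakly-above-diagonal
lattice path counts: entry `(r,s)` is `1` if `r = s` and otherwise the number of paths
from `(i_s, j_s + 1)` to `(i_r − 1, j_r)`, the last column counts paths from `(0,1)` to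
`(i_r − 1, j_r)`, the last row counts paths from `(i_s, j_s + 1)` to `(n, n+1)`, and the
bottom-right entry counts paths from `(0,1)` to `(n, n+1)`. -/
theorem stmt8 (n k : ℕ) (w : Equiv.Perm (Fin (n + 1))) (ρ : Fin k → ℕ × ℕ)
    (hinj : Function.Injective ρ)
    (hinv : ∀ p : ℕ × ℕ, (∃ m, ρ m = p) ↔
      IsRootA n p ∧ ∃ (hi : p.1 - 1 < n + 1) (hj : p.2 < n + 1),
        w ⟨p.2, hj⟩ < w ⟨p.1 - 1, hi⟩) :
    (Nat.card {A : Set (ℕ × ℕ) // (∀ p ∈ A, IsRootA n p) ∧ IsAntichain rootLeA A ∧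
        ∀ m, ρ m ∉ A} : ℤ) =
      Matrix.det (Matrix.of fun r s : Fin (k + 1) =>
        if hr : (r : ℕ) < k then
          if hs : (s : ℕ) < k then
            if (r : ℕ) = (s : ℕ) then (1 : ℤ)
            else (latticeCount (((ρ ⟨s, hs⟩).1 : ℤ), ((ρ ⟨s, hs⟩).2 : ℤ) + 1)
              (((ρ ⟨r, hr⟩).1 : ℤ) - 1, ((ρ ⟨r, hr⟩).2 : ℤ)) : ℤ)
          else (latticeCount (0, 1)
            (((ρ ⟨r, hr⟩).1 : ℤ) - 1, ((ρ ⟨r, hr⟩).2 : ℤ)) : ℤ)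
        else
          if hs : (s : ℕ) < k then
            (latticeCount (((ρ ⟨s, hs⟩).1 : ℤ), ((ρ ⟨s, hs⟩).2 : ℤ) + 1)
              ((n : ℤ), (n : ℤ) + 1) : ℤ)
          else (latticeCount (0, 1) ((n : ℤ), (n : ℤ) + 1) : ℤ)) := by
  have hroot : ∀ m, IsRootA n (ρ m) := fun m => ((hinv (ρ m)).1 ⟨m, rfl⟩).1
  have hcard : Nat.card {A : Set (ℕ × ℕ) // (∀ p ∈ A, IsRootA n p) ∧ IsAntichain rootLeA A ∧
      ∀ m, ρ m ∉ A} = avoidingAntichainCount (univ.image ρ) (n, n + 1) := by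
    rw [avoidingAntichainCount, ← natCard_antichains_eq_card_rootAntichains]
    refine Nat.card_congr (Equiv.subtypeEquivRight fun A => ?_)
    rw [subset_rootBox_sdiff_image_iff]
    tauto
  change _ = (pathMatrix n ρ).det
  rw [hcard, Matrix.det_eq_mul_det_updateCol_single (by simp)
    (pathMatrix_mulVec hinj fun m => ⟨(hroot m).1, (hroot m).2.1⟩),
    det_pathMatrix_updateCol_last fun m => (hroot m).2.1.trans (hroot m).2.2, mul_one]
end

section
/- Let σ ∈ S_{n+1} be written as a product of disjoint cycles σ = c₁⋯c_ℓ, and let A = (a_{ij}) be an (n+1)×(n+1) matrix such that for every nontrivial cycle c not containing the element n+1, the product ∏_{i∈c} a_{i,c(i)} = 0. Then det(A) = Σ_σ sgn(σ)·∏_i a_{i,σ(i)} where the sum may be restricted to permutations σ whose cycle decomposition contains at most one nontrivial cycle, and that cycle contains n+1. -/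
open Classical in
/-- Leibniz formula restricted by vanishing cycles: if `A` is an `(n+1) × (n+1)` matrix
with `a_{ii} = 1` for `i ≠ n+1`, and for every nontrivial cycle `c` not containing the
last index the product `∏_{i ∈ c} a_{i, c(i)}` vanishes, then `det A` equals the Leibniz
sum restricted to permutations whose cycle decomposition has at most one nontrivial
cycle, that cycle containing the last index. -/
theorem stmt17 {n : ℕ} {R : Type*} [CommRing R] (A : Matrix (Fin (n + 1)) (Fin (n + 1)) R)
    (hdiag : ∀ i : Fin (n + 1), i ≠ Fin.last n → A i i = 1)
    (hcyc : ∀ c : Equiv.Perm (Fin (n + 1)), c.IsCycle → c (Fin.last n) = Fin.last n →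
      ∏ i ∈ c.support, A i (c i) = 0) :
    A.det = ∑ σ : Equiv.Perm (Fin (n + 1)),
      if σ = 1 ∨ (σ.IsCycle ∧ σ (Fin.last n) ≠ Fin.last n) then
        Equiv.Perm.sign σ • ∏ i, A i (σ i)
      else 0 := by
  have key : ∀ σ : Equiv.Perm (Fin (n+1)),
      ¬(σ = 1 ∨ (σ.IsCycle ∧ σ (Fin.last n) ≠ Fin.last n)) →
      (∏ i, A i (σ i)) = 0 := by
    intro σ hσ
    push_neg at hσ
    obtain ⟨hne, hnc⟩ := hσ
    obtain ⟨c, hc, hlast⟩ : ∃ c ∈ σ.cycleFactorsFinset, c (Fin.last n) = Fin.last n := by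
      by_cases hcy : σ.IsCycle
      · exact ⟨σ, Equiv.Perm.mem_cycleFactorsFinset_iff.2 ⟨hcy, fun i _ => rfl⟩, hnc hcy⟩
      · have h0 : σ.cycleFactorsFinset ≠ ∅ := by
          simpa [Equiv.Perm.cycleFactorsFinset_eq_empty_iff] using hne
        have hcard0 : σ.cycleFactorsFinset.card ≠ 0 := fun h => h0 (Finset.card_eq_zero.1 h)
        have hcard1 : σ.cycleFactorsFinset.card ≠ 1 := by
          intro h
          obtain ⟨c, hc⟩ := Finset.card_eq_one.1 h
          exact hcy (Equiv.Perm.cycleFactorsFinset_eq_singleton_iff.1 hc).1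
        have h1 : 1 < σ.cycleFactorsFinset.card := by omega
        obtain ⟨c₁, hc₁, c₂, hc₂, hne12⟩ := Finset.one_lt_card.1 h1
        have hdisj := (Equiv.Perm.cycleFactorsFinset_pairwise_disjoint σ) hc₁ hc₂ hne12
        rcases hdisj (Fin.last n) with h | h
        · exact ⟨c₁, hc₁, h⟩
        · exact ⟨c₂, hc₂, h⟩
    have hcyc' := hcyc c (Equiv.Perm.mem_cycleFactorsFinset_iff.1 hc).1 hlast
    have heq : ∏ i ∈ c.support, A i (σ i) = 0 := by
      rw [← hcyc']
      exact Finset.prod_congr rfl fun i hi => by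
        rw [(Equiv.Perm.mem_cycleFactorsFinset_iff.1 hc).2 i hi]
    calc (∏ i, A i (σ i))
        = (∏ i ∈ c.support, A i (σ i)) * ∏ i ∈ c.supportᶜ, A i (σ i) :=
          (Finset.prod_mul_prod_compl _ _).symm
      _ = 0 := by rw [heq, zero_mul]
  rw [← Matrix.det_transpose A, Matrix.det_apply]
  apply Finset.sum_congr rfl
  intro σ _
  split_ifs with h
  · simp [Matrix.transpose_apply]
  · have := key σ h
    simp only [Matrix.transpose_apply, this, smul_zero]
end
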